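/- arXiv:2508.20204 — 4 statements merged into one kernel-verified Lean document; each statement's English description precedes it below -/
import Mathlib

section
/- Under the standing assumptions on G, let S ⊆ 𝒳 be a closed set and let 𝟙_S denote its indicator function. Define recursively λ_0^S(x) = 𝟙_S(x) and λ_{k+1}^S(x, v_0, …, v_k) = sup_{x_1 ∈ G(x, v_0)} λ_k^S(x_1, v_1, …, v_k). Then for each k ∈ ℕ and each x ∈ 𝒳, the function (v_0, …, v_k) ↦ λ_{k+1}^S(x, v_0, …, v_k) is measurable on 𝒱^{k+1}. -/
open MeasureTheory Set Pointwise

/-- A set-valued map `G` is upper semicontinuous on `X`. -/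
def USCOn {E F : Type*} [TopologicalSpace E] [NormedAddCommGroup F]
    (X : Set E) (G : E → Set F) : Prop :=
  ∀ x ∈ X, ∀ δ > 0, ∃ U ∈ nhds x, ∀ y ∈ U ∩ X, G y ⊆ G x + Metric.ball 0 δ

/-- A set-valued map `G` is locally bounded on `X`. -/
def LocallyBoundedOn {E F : Type*} [TopologicalSpace E] [Norm F]
    (X : Set E) (G : E → Set F) : Prop :=
  ∀ x ∈ X, ∃ U ∈ nhds x, ∃ β > 0, ∀ y ∈ U ∩ X, ∀ ζ ∈ G y, ‖ζ‖ ≤ β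

/-- Measurability of a set-valued map. -/
def MeasSetValued {T F : Type*} [MeasurableSpace T] [TopologicalSpace F]
    (S : T → Set F) : Prop :=
  ∀ O : Set F, IsOpen O → MeasurableSet {t | (S t ∩ O).Nonempty}

/-- Standing assumptions on the stochastic difference inclusion `x⁺ ∈ G x v`. -/
structure Standing {n m : ℕ} (X : Set (Fin n → ℝ)) (V : Set (Fin m → ℝ))
    (G : (Fin n → ℝ) → (Fin m → ℝ) → Set (Fin n → ℝ)) : Prop where
  usc : ∀ v ∈ V, USCOn X (fun x => G x v)
  locBdd : LocallyBoundedOn (X ×ˢ V) (fun p => G p.1 p.2)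
  nonemptyVals : ∀ x ∈ X, ∀ v ∈ V, (G x v).Nonempty
  closedVals : ∀ x ∈ X, ∀ v ∈ V, IsClosed (G x v)
  convexVals : ∀ x ∈ X, ∀ v ∈ V, Convex ℝ (G x v)
  graphMeas : MeasSetValued (fun v : Fin m → ℝ =>
    {p : (Fin n → ℝ) × (Fin n → ℝ) | p.1 ∈ X ∧ p.2 ∈ G p.1 v})

/-- The recursively defined functions `λ_k^B`:
`λ_0^B(x) = B(x)`, `λ_{k+1}^B(x, v₀,…,v_k) = sup_{x₁ ∈ G(x,v₀)} λ_k^B(x₁, v₁,…,v_k)`. -/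
noncomputable def lam {α β : Type*} (G : α → β → Set α) (B : α → ℝ) :
    (k : ℕ) → α → (Fin k → β) → ℝ
  | 0, x, _ => B x
  | (k+1), x, v => sSup ((fun y => lam G B k y (fun i => v i.succ)) '' G x (v 0))

/-!
`λ_k^S(x, v)` is the indicator of the event that the set `R_k(x, v) = reach G k x v` of states
reachable from `x` under the inputs `v` meets `S`. Upper semicontinuity with closed values makes
the graph of `G(·, w)` closed over `𝒳`, and local boundedness makes it proper there, so the
reachable sets are compact. Measurability of `{v | R_k(x, v) ∩ C ≠ ∅}` for every closed `C` then
follows by induction on `k`: `R_{k+1}` meets `C` iff the graph of `G(·, v_k)` meets `R_k × C`,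
and by compactness of `R_k` this is equivalent to a countable combination of events
"`R_k` meets a small closed ball around a point of a countable dense set" and
"the graph of `G(·, v_k)` meets an open set".
-/

open Metric Filter Topology

def reach {α β : Type*} (G : α → β → Set α) : (k : ℕ) → α → (Fin k → β) → Set α
  | 0, x, _ => {x}
  | k + 1, x, v => ⋃ y ∈ G x (v 0), reach G k y (Fin.tail v)

section Reach

variable {α β : Type*} (G : α → β → Set α)

theorem reach_succ_eq_biUnion_init (k : ℕ) (x : α) (v : Fin (k + 1) → β) :
    reach G (k + 1) x v = ⋃ y ∈ reach G k x (Fin.init v), G y (v (Fin.last k)) := by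
  induction k generalizing x with
  | zero => ext; simp [reach]
  | succ k ih =>
    rw [reach, reach, Fin.tail_init_eq_init_tail]
    ext
    simp [ih, Fin.init, Fin.tail]

theorem reach_succ_inter_nonempty_iff (k : ℕ) (x : α) (v : Fin (k + 1) → β) (T : Set α) :
    (reach G (k + 1) x v ∩ T).Nonempty ↔
      ∃ y ∈ G x (v 0), (reach G k y (Fin.tail v) ∩ T).Nonempty := by
  simp only [reach, iUnion₂_inter, nonempty_iUnion, exists_prop]

open Classical in
theorem Real.sSup_image_ite {ι : Type*} (s : Set ι) (P : ι → Prop) :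
    sSup ((fun y => if P y then (1 : ℝ) else 0) '' s) = if ∃ y ∈ s, P y then 1 else 0 := by
  split_ifs with h
  · obtain ⟨y, hys, hy⟩ := h
    refine IsGreatest.csSup_eq ⟨⟨y, hys, if_pos hy⟩, ?_⟩
    rintro _ ⟨z, -, rfl⟩
    dsimp only
    split_ifs <;> norm_num
  · push Not at h
    refine le_antisymm (Real.sSup_nonpos ?_) (Real.sSup_nonneg ?_) <;>
      rintro _ ⟨z, hz, rfl⟩ <;> simp [h z hz]

open Classical in
theorem lam_indicator_eq_ite (T : Set α) (k : ℕ) (x : α) (v : Fin k → β) :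
    lam G (T.indicator fun _ => (1 : ℝ)) k x v =
      if (reach G k x v ∩ T).Nonempty then 1 else 0 := by
  induction k generalizing x with
  | zero => simp [lam, reach, indicator_apply]
  | succ k ih =>
    rw [reach_succ_inter_nonempty_iff, ← Real.sSup_image_ite, lam]
    exact congrArg sSup (image_congr fun y _ => ih y (Fin.tail v))

end Reach

theorem reach_subset {α β : Type*} {G : α → β → Set α} {X : Set α} {V : Set β}
    (hmap : ∀ x ∈ X, ∀ v ∈ V, G x v ⊆ X) {k : ℕ} {x : α} (hx : x ∈ X) {v : Fin k → β}
    (hv : ∀ i, v i ∈ V) : reach G k x v ⊆ X := by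
  induction k generalizing x with
  | zero => simpa [reach] using hx
  | succ k ih => exact iUnion₂_subset fun y hy => ih (hmap x hx _ (hv 0) hy) fun i => hv i.succ

theorem IsClosed.mem_of_tendsto_of_eventually_mem_thickening {E ι : Type*}
    [PseudoMetricSpace E] {s : Set E} (hs : IsClosed s) {l : Filter ι} [l.NeBot] {u : ι → E}
    {b : E} (hu : Tendsto u l (𝓝 b)) (h : ∀ δ > 0, ∀ᶠ j in l, u j ∈ thickening δ s) :
    b ∈ s := by
  rw [← hs.closure_eq, closure_eq_iInter_cthickening, mem_iInter₂]
  exact fun δ hδ => isClosed_cthickening.mem_of_tendsto hu <|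
    (h δ hδ).mono fun j hj => thickening_subset_cthickening δ s hj

section HitMeasurability

variable {E F : Type*} [PseudoMetricSpace E] [PseudoMetricSpace F]

def IsSeqProperOver (Γ : Set (E × F)) (K : Set E) : Prop :=
  ∀ a ∈ K, ∀ (y : ℕ → E) (ζ : ℕ → F), (∀ j, (y j, ζ j) ∈ Γ) → Tendsto y atTop (𝓝 a) →
    ∃ b, (a, b) ∈ Γ ∧ ∃ φ : ℕ → ℕ, StrictMono φ ∧ Tendsto (ζ ∘ φ) atTop (𝓝 b)

theorem inter_prod_nonempty_iff_forall_exists {K : Set E} (hK : IsCompact K)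
    {Γ : Set (E × F)} (hΓ : IsSeqProperOver Γ K) {C : Set F} (hC : IsClosed C)
    {D : Set E} (hD : Dense D) {ε : ℕ → ℝ} (hε0 : ∀ M, 0 < ε M) (hε : Tendsto ε atTop (𝓝 0)) :
    (Γ ∩ K ×ˢ C).Nonempty ↔ ∀ M, ∃ q ∈ D, (K ∩ closedBall q (ε M)).Nonempty ∧
      (Γ ∩ ball q (2 * ε M) ×ˢ thickening (ε M) C).Nonempty := by
  constructor
  · rintro ⟨⟨y, ζ⟩, hyζ, hy, hζ⟩ M
    obtain ⟨q, hqy, hqD⟩ := Metric.dense_iff.1 hD y (ε M) (hε0 M)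
    have hyq : dist y q < ε M := by rwa [dist_comm]
    refine ⟨q, hqD, ⟨y, hy, hyq.le⟩, ⟨(y, ζ), hyζ, ?_, self_subset_thickening (hε0 M) C hζ⟩⟩
    exact mem_ball.2 (by linarith [hε0 M])
  · intro h
    choose q _ hy hp using h
    choose y hy using hy
    choose p hp using hp
    obtain ⟨a, haK, φ, hφ, hya⟩ := hK.tendsto_subseq fun M => (hy M).1
    have hdist : ∀ M, dist (y M) (p M).1 ≤ 3 * ε M := fun M => by
      linarith [dist_triangle_right (y M) (p M).1 (q M), mem_closedBall.1 (hy M).2,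
        mem_ball.1 (hp M).2.1]
    have hpa : Tendsto (fun j => (p (φ j)).1) atTop (𝓝 a) := by
      refine hya.congr_dist (squeeze_zero (fun _ => dist_nonneg) (fun j => hdist (φ j)) ?_)
      exact (by simpa using hε.const_mul 3 : Tendsto (fun M => 3 * ε M) atTop (𝓝 0)).comp
        hφ.tendsto_atTop
    obtain ⟨b, hab, ψ, hψ, hζb⟩ := hΓ a haK _ _ (fun j => (hp (φ j)).1) hpa
    refine ⟨(a, b), hab, haK, hC.mem_of_tendsto_of_eventually_mem_thickening hζb fun δ hδ => ?_⟩
    filter_upwards [(hε.comp (hφ.comp hψ).tendsto_atTop).eventually (gt_mem_nhds hδ)] with j hj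
    exact thickening_mono hj.le C (hp (φ (ψ j))).2.2

theorem measurableSet_inter_prod_nonempty {T : Type*} [MeasurableSpace T]
    [TopologicalSpace.SeparableSpace E] {K : T → Set E} (hKc : ∀ t, IsCompact (K t))
    (hK : ∀ C, IsClosed C → MeasurableSet {t | (K t ∩ C).Nonempty})
    {Γ : T → Set (E × F)} (hΓm : MeasSetValued Γ) (hΓ : ∀ t, IsSeqProperOver (Γ t) (K t))
    {C : Set F} (hC : IsClosed C) : MeasurableSet {t | (Γ t ∩ K t ×ˢ C).Nonempty} := by
  obtain ⟨D, hDc, hD⟩ := TopologicalSpace.exists_countable_dense E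
  set ε : ℕ → ℝ := fun M => 1 / (M + 1)
  have hε0 : ∀ M, 0 < ε M := fun M => Nat.one_div_pos_of_nat
  have hset : {t | (Γ t ∩ K t ×ˢ C).Nonempty} = ⋂ M, ⋃ q ∈ D,
      {t | (K t ∩ closedBall q (ε M)).Nonempty} ∩
        {t | (Γ t ∩ ball q (2 * ε M) ×ˢ thickening (ε M) C).Nonempty} := by
    ext t
    simpa only [mem_ofPred_eq, mem_iInter, mem_iUnion, mem_inter_iff, exists_prop] using
      inter_prod_nonempty_iff_forall_exists (hKc t) (hΓ t) hC hD hε0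
        tendsto_one_div_add_atTop_nhds_zero_nat
  rw [hset]
  exact .iInter fun M => .biUnion hDc fun q _ =>
    (hK _ isClosed_closedBall).inter (hΓm _ (isOpen_ball.prod isOpen_thickening))

end HitMeasurability

section Standing

variable {n m : ℕ} {X : Set (Fin n → ℝ)} {V : Set (Fin m → ℝ)}
  {G : (Fin n → ℝ) → (Fin m → ℝ) → Set (Fin n → ℝ)} {w : Fin m → ℝ}

theorem Standing.mem_of_tendsto (hG : Standing X V G) (hw : w ∈ V) {ι : Type*}
    {l : Filter ι} [l.NeBot] {y ζ : ι → Fin n → ℝ} {a b : Fin n → ℝ} (ha : a ∈ X)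
    (hy : ∀ j, y j ∈ X) (hζ : ∀ j, ζ j ∈ G (y j) w) (hya : Tendsto y l (𝓝 a))
    (hζb : Tendsto ζ l (𝓝 b)) : b ∈ G a w := by
  refine (hG.closedVals a ha w hw).mem_of_tendsto_of_eventually_mem_thickening hζb
    fun δ hδ => ?_
  obtain ⟨U, hU, hsub⟩ := hG.usc w hw a ha δ hδ
  filter_upwards [hya hU] with j hj
  rw [← add_ball_zero]
  exact hsub (y j) ⟨hj, hy j⟩ (hζ j)

theorem Standing.isSeqProperOver_graph (hG : Standing X V G) (hw : w ∈ V)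
    {K : Set (Fin n → ℝ)} (hKX : K ⊆ X) :
    IsSeqProperOver {p | p.1 ∈ X ∧ p.2 ∈ G p.1 w} K := by
  intro a haK y ζ hyζ hya
  obtain ⟨U, hU, β, -, hβ⟩ := hG.locBdd (a, w) ⟨hKX haK, hw⟩
  have hbdd : ∀ᶠ j in atTop, ζ j ∈ closedBall 0 β := by
    filter_upwards [hya.prodMk_nhds (tendsto_const_nhds (x := w)) hU] with j hj
    exact mem_closedBall_zero_iff.2 (hβ _ ⟨hj, (hyζ j).1, hw⟩ _ (hyζ j).2)
  obtain ⟨b, -, φ, hφ, hζb⟩ :=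
    tendsto_subseq_of_frequently_bounded isBounded_closedBall hbdd.frequently
  refine ⟨b, ⟨hKX haK, ?_⟩, φ, hφ, hζb⟩
  exact hG.mem_of_tendsto hw (hKX haK) (fun j => (hyζ (φ j)).1) (fun j => (hyζ (φ j)).2)
    (hya.comp hφ.tendsto_atTop) hζb

theorem Standing.isCompact_biUnion (hG : Standing X V G) (hw : w ∈ V)
    {K : Set (Fin n → ℝ)} (hK : IsCompact K) (hKX : K ⊆ X) : IsCompact (⋃ y ∈ K, G y w) := by
  refine IsSeqCompact.isCompact fun ζ hζ => ?_
  simp only [mem_iUnion₂] at hζ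
  choose y hyK hζy using hζ
  obtain ⟨a, haK, φ, hφ, hya⟩ := hK.tendsto_subseq hyK
  obtain ⟨b, ⟨-, hb⟩, ψ, hψ, hζb⟩ := hG.isSeqProperOver_graph hw hKX a haK (y ∘ φ) (ζ ∘ φ)
    (fun j => ⟨hKX (hyK (φ j)), hζy (φ j)⟩) hya
  exact ⟨b, mem_biUnion haK hb, φ ∘ ψ, hφ.comp hψ, hζb⟩

theorem Standing.isCompact_reach (hG : Standing X V G) (hmap : ∀ x ∈ X, ∀ v ∈ V, G x v ⊆ X)
    {x : Fin n → ℝ} (hx : x ∈ X) {k : ℕ} {v : Fin k → Fin m → ℝ} (hv : ∀ i, v i ∈ V) :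
    IsCompact (reach G k x v) := by
  induction k with
  | zero => exact isCompact_singleton
  | succ k ih =>
    rw [reach_succ_eq_biUnion_init]
    exact hG.isCompact_biUnion (hv _) (ih fun i => hv _) (reach_subset hmap hx fun i => hv _)

theorem Standing.measurableSet_reach_inter_nonempty (hG : Standing X V G)
    (hmap : ∀ x ∈ X, ∀ v ∈ V, G x v ⊆ X) {x : Fin n → ℝ} (hx : x ∈ X) (k : ℕ)
    {C : Set (Fin n → ℝ)} (hC : IsClosed C) :
    MeasurableSet {v : {v : Fin k → Fin m → ℝ // ∀ i, v i ∈ V} |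
      (reach G k x v.1 ∩ C).Nonempty} := by
  induction k generalizing C with
  | zero =>
    simp only [reach, singleton_inter_nonempty]
    exact .const _
  | succ k ih =>
    let init (v : {v : Fin (k + 1) → Fin m → ℝ // ∀ i, v i ∈ V}) :
        {v : Fin k → Fin m → ℝ // ∀ i, v i ∈ V} := ⟨Fin.init v.1, fun i => v.2 _⟩
    have hinit : Measurable init := by
      refine Measurable.subtype_mk (measurable_pi_lambda _ fun i => ?_)
      exact (measurable_pi_apply _).comp measurable_subtype_coe
    have hlast : Measurable fun v : {v : Fin (k + 1) → Fin m → ℝ // ∀ i, v i ∈ V} =>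
        v.1 (Fin.last k) := (measurable_pi_apply _).comp measurable_subtype_coe
    have hset : {v : {v : Fin (k + 1) → Fin m → ℝ // ∀ i, v i ∈ V} |
          (reach G (k + 1) x v.1 ∩ C).Nonempty} =
        {v | ({p | p.1 ∈ X ∧ p.2 ∈ G p.1 (v.1 (Fin.last k))} ∩
          reach G k x (init v).1 ×ˢ C).Nonempty} := by
      ext v
      simp only [mem_ofPred_eq, reach_succ_eq_biUnion_init]
      constructor
      · rintro ⟨z, hz, hzC⟩
        obtain ⟨y, hy, hzy⟩ := mem_iUnion₂.1 hz
        exact ⟨(y, z), ⟨reach_subset hmap hx (init v).2 hy, hzy⟩, hy, hzC⟩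
      · rintro ⟨⟨y, z⟩, ⟨-, hzy⟩, hy, hzC⟩
        exact ⟨z, mem_iUnion₂.2 ⟨y, hy, hzy⟩, hzC⟩
    rw [hset]
    refine measurableSet_inter_prod_nonempty (fun v => hG.isCompact_reach hmap hx (init v).2)
      (fun C hC => hinit (ih hC)) (fun O hO => hlast (hG.graphMeas O hO))
      (fun v => hG.isSeqProperOver_graph (v.2 _) (reach_subset hmap hx (init v).2)) hC

end Standing

theorem stmt2_general {n m : ℕ} (X : Set (Fin n → ℝ)) (V : Set (Fin m → ℝ))
    (G : (Fin n → ℝ) → (Fin m → ℝ) → Set (Fin n → ℝ))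
    (hG : Standing X V G)
    (hmap : ∀ x ∈ X, ∀ v ∈ V, G x v ⊆ X)
    (S : Set (Fin n → ℝ)) (hS : IsClosed S)
    (k : ℕ) (x : Fin n → ℝ) (hx : x ∈ X) :
    Measurable (fun v : {v : Fin (k+1) → (Fin m → ℝ) // ∀ i, v i ∈ V} =>
      lam G (S.indicator fun _ => (1 : ℝ)) (k+1) x v.val) := by
  simp only [lam_indicator_eq_ite]
  exact Measurable.ite (hG.measurableSet_reach_inter_nonempty hmap hx (k + 1) hS)
    measurable_const measurable_const

/-- Under the standing assumptions, for a closed set `S ⊆ 𝒳`, the functions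
`λ_{k+1}^S` built from the indicator of `S` are measurable in `(v₀,…,v_k) ∈ 𝒱^{k+1}`
for each fixed `x ∈ 𝒳`. -/
theorem stmt2 {n m : ℕ} (X : Set (Fin n → ℝ)) (V : Set (Fin m → ℝ))
    (G : (Fin n → ℝ) → (Fin m → ℝ) → Set (Fin n → ℝ))
    (hG : Standing X V G)
    (hmap : ∀ x ∈ X, ∀ v ∈ V, G x v ⊆ X)
    (S : Set (Fin n → ℝ)) (hS : IsClosed S) (hSX : S ⊆ X)
    (k : ℕ) (x : Fin n → ℝ) (hx : x ∈ X) :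
    Measurable (fun v : {v : Fin (k+1) → (Fin m → ℝ) // ∀ i, v i ∈ V} =>
      lam G (S.indicator fun _ => (1 : ℝ)) (k+1) x v.val) :=
  stmt2_general X V G hG hmap S hS k x hx
end

section
/- Under the standing assumptions on G, suppose in addition that G is a convex set-valued map (its graph {(x, v, y) : y ∈ G(x, v)} is convex) with 𝒳 and 𝒱 convex, and let B : 𝒳 → [0, ∞) be a concave upper semicontinuous function. Define λ_0^B(x) = B(x) and λ_{k+1}^B(x, v_0, …, v_k) = sup_{x_1 ∈ G(x, v_0)} λ_k^B(x_1, v_1, …, v_k). Then for every k ≥ 0 the function λ_k^B is concave jointly in its arguments (x, v_0, …, v_{k−1}) ∈ 𝒳 × 𝒱^k. -/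
open MeasureTheory Set Pointwise

/-!
`λ_{k+1}^B(x, v)` is the supremum, over the fibre `G(x, v₀)` of a convex graph, of
`(x, v, x₁) ↦ λ_k^B(x₁, v₁, …, v_k)`, which is jointly concave by induction; a partial supremum
of a concave function over the fibres of a convex set is concave. The suprema are finite
(so `sSup` does not take its junk value `0`) because an upper semicontinuous, closed-valued,
locally bounded `G` maps compact sets to compact sets, on which the upper semicontinuous `B`
is bounded.
-/

open Metric Bornology

theorem LocallyBoundedOn.slice {E W F : Type*} [TopologicalSpace E] [TopologicalSpace W] [Norm F]
    {X : Set E} {V : Set W} {G : E → W → Set F}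
    (hG : LocallyBoundedOn (X ×ˢ V) (fun p => G p.1 p.2)) {v : W} (hv : v ∈ V) :
    LocallyBoundedOn X (fun x => G x v) := by
  intro x hx
  obtain ⟨U, hU, β, hβ, hUβ⟩ := hG (x, v) ⟨hx, hv⟩
  exact ⟨(·, v) ⁻¹' U, (Continuous.prodMk_left v).continuousAt.preimage_mem_nhds hU, β, hβ,
    fun y hy => hUβ (y, v) ⟨hy.1, hy.2, hv⟩⟩

theorem LocallyBoundedOn.isBounded_biUnion {E F : Type*} [TopologicalSpace E]
    [SeminormedAddCommGroup F] {X K : Set E} {G : E → Set F} (hG : LocallyBoundedOn X G)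
    (hK : IsCompact K) (hKX : K ⊆ X) : IsBounded (⋃ x ∈ K, G x) := by
  refine hK.induction_on (p := fun s => IsBounded (⋃ x ∈ s, G x)) (by simp)
    (fun s t hst ht => ht.subset (biUnion_subset_biUnion_left hst))
    (fun s t hs ht => by rw [biUnion_union]; exact hs.union ht) fun x hx => ?_
  obtain ⟨U, hU, β, -, hβ⟩ := hG x (hKX hx)
  refine ⟨K ∩ U, inter_mem_nhdsWithin K hU, isBounded_iff_forall_norm_le.mpr ⟨β, fun ζ hζ => ?_⟩⟩
  obtain ⟨y, hy, hζy⟩ := mem_iUnion₂.mp hζ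
  exact hβ y ⟨hy.2, hKX hy.1⟩ ζ hζy

section USC

variable {E F : Type*} [TopologicalSpace E] [NormedAddCommGroup F] {X K : Set E} {G : E → Set F}

theorem USCOn.isClosed_biUnion (hG : USCOn X G) (hcl : ∀ x ∈ X, IsClosed (G x))
    (hK : IsCompact K) (hKX : K ⊆ X) : IsClosed (⋃ x ∈ K, G x) := by
  refine isOpen_compl_iff.mp (Metric.isOpen_iff.mpr fun ζ hζ => ?_)
  obtain ⟨ε, hε, hdisj⟩ : ∃ ε > 0, ∀ y ∈ K, Disjoint (ball ζ ε) (G y) := by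
    refine hK.induction_on (p := fun s => ∃ ε > 0, ∀ y ∈ s, Disjoint (ball ζ ε) (G y))
      ⟨1, one_pos, by simp⟩ (fun s t hst ⟨ε, hε, h⟩ => ⟨ε, hε, fun y hy => h y (hst hy)⟩) ?_ ?_
    · rintro s t ⟨ε, hε, hs⟩ ⟨δ, hδ, ht⟩
      refine ⟨min ε δ, lt_min hε hδ, fun y hy => ?_⟩
      rcases hy with hy | hy
      · exact (hs y hy).mono_left (ball_subset_ball (min_le_left _ _))
      · exact (ht y hy).mono_left (ball_subset_ball (min_le_right _ _))
    · intro x hx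
      obtain ⟨ε, hε, hball⟩ := Metric.isOpen_iff.mp (hcl x (hKX hx)).isOpen_compl ζ
        fun h => hζ (mem_biUnion hx h)
      obtain ⟨U, hU, hUG⟩ := hG x (hKX hx) (ε / 2) (half_pos hε)
      refine ⟨K ∩ U, inter_mem_nhdsWithin K hU, ε / 2, half_pos hε, fun y hy => ?_⟩
      refine Set.disjoint_left.mpr fun z hzζ hzy => ?_
      obtain ⟨g, hg, hzg⟩ :=
        mem_thickening_iff.mp (add_ball_zero (ε / 2) (G x) ▸ hUG y ⟨hy.2, hKX hy.1⟩ hzy)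
      refine hball ?_ hg
      rw [mem_ball] at hzζ ⊢
      linarith [dist_triangle g z ζ, dist_comm z g]
  refine ⟨ε, hε, fun z hz => ?_⟩
  simp only [Set.mem_compl_iff, Set.mem_iUnion, not_exists]
  exact fun y hy hzy => Set.disjoint_left.mp (hdisj y hy) hz hzy

theorem USCOn.isCompact_biUnion [ProperSpace F] (hG : USCOn X G)
    (hcl : ∀ x ∈ X, IsClosed (G x)) (hbdd : LocallyBoundedOn X G) (hK : IsCompact K)
    (hKX : K ⊆ X) : IsCompact (⋃ x ∈ K, G x) :=
  isCompact_of_isClosed_isBounded (hG.isClosed_biUnion hcl hK hKX) (hbdd.isBounded_biUnion hK hKX)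

end USC

theorem ConcaveOn.sSup_image {E Y : Type*} [AddCommGroup E] [Module ℝ E] [AddCommGroup Y]
    [Module ℝ Y] {P : Set E} {Γ : E → Set Y} {g : E × Y → ℝ} (hP : Convex ℝ P)
    (hg : ConcaveOn ℝ {q | q.1 ∈ P ∧ q.2 ∈ Γ q.1} g) (hne : ∀ p ∈ P, (Γ p).Nonempty)
    (hbdd : ∀ p ∈ P, BddAbove ((fun y => g (p, y)) '' Γ p)) :
    ConcaveOn ℝ P (fun p => sSup ((fun y => g (p, y)) '' Γ p)) := by
  refine ⟨hP, fun p hp q hq a b ha hb hab => ?_⟩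
  rw [← Real.sSup_smul_of_nonneg ha, ← Real.sSup_smul_of_nonneg hb,
    ← csSup_add (((hne p hp).image _).smul_set) ((hbdd p hp).smul_of_nonneg ha)
      (((hne q hq).image _).smul_set) ((hbdd q hq).smul_of_nonneg hb)]
  refine csSup_le ((((hne p hp).image _).smul_set).add ((hne q hq).image _).smul_set) ?_
  rintro _ ⟨_, ⟨_, ⟨y, hy, rfl⟩, rfl⟩, _, ⟨_, ⟨z, hz, rfl⟩, rfl⟩, rfl⟩
  calc a • g (p, y) + b • g (q, z) ≤ g (a • (p, y) + b • (q, z)) :=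
        hg.2 ⟨hp, hy⟩ ⟨hq, hz⟩ ha hb hab
    _ ≤ _ := le_csSup (hbdd _ (hP hp hq ha hb hab))
        ⟨a • y + b • z, (hg.1 (x := (p, y)) (y := (q, z)) ⟨hp, hy⟩ ⟨hq, hz⟩ ha hb hab).2, rfl⟩

section lam

variable {E W : Type*} {G : E → W → Set E} {B : E → ℝ} {X : Set E} {V : Set W}

theorem bddAbove_lam_image [TopologicalSpace E]
    (hcomp : ∀ v ∈ V, ∀ K ⊆ X, IsCompact K → IsCompact (⋃ x ∈ K, G x v))
    (hne : ∀ x ∈ X, ∀ v ∈ V, (G x v).Nonempty) (hmap : ∀ x ∈ X, ∀ v ∈ V, G x v ⊆ X)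
    (hB : UpperSemicontinuousOn B X) :
    ∀ (k : ℕ) {K : Set E} (v : Fin k → W), K ⊆ X → IsCompact K → (∀ i, v i ∈ V) →
      BddAbove ((fun x => lam G B k x v) '' K)
  | 0, _, _, hKX, hK, _ => (hB.mono hKX).bddAbove_of_isCompact hK
  | k + 1, K, v, hKX, hK, hv => by
    have hTX : (⋃ x ∈ K, G x (v 0)) ⊆ X := iUnion₂_subset fun x hx => hmap x (hKX hx) _ (hv 0)
    have hT := bddAbove_lam_image hcomp hne hmap hB k (Fin.tail v) hTX
      (hcomp _ (hv 0) K hKX hK) fun i => hv i.succ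
    refine ⟨sSup ((fun y => lam G B k y (Fin.tail v)) '' ⋃ x ∈ K, G x (v 0)), ?_⟩
    rintro _ ⟨x, hx, rfl⟩
    exact csSup_le_csSup hT ((hne x (hKX hx) _ (hv 0)).image _)
      (image_mono (subset_biUnion_of_mem (u := fun x => G x (v 0)) hx))

variable [AddCommGroup E] [Module ℝ E] [AddCommGroup W] [Module ℝ W]

theorem concaveOn_lam_zero (hB : ConcaveOn ℝ X B) :
    ConcaveOn ℝ (X ×ˢ univ.pi fun _ : Fin 0 => V) (fun p => lam G B 0 p.1 p.2) :=
  ⟨hB.1.prod (convex_pi fun i => i.elim0),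
    fun _ hp _ hq _ _ ha hb hab => hB.2 hp.1 hq.1 ha hb hab⟩

theorem ConcaveOn.lam_succ {k : ℕ} (hX : Convex ℝ X) (hV : Convex ℝ V)
    (hgraph : Convex ℝ {p : (E × W) × E | p.1.1 ∈ X ∧ p.1.2 ∈ V ∧ p.2 ∈ G p.1.1 p.1.2})
    (hmap : ∀ x ∈ X, ∀ v ∈ V, G x v ⊆ X) (hne : ∀ x ∈ X, ∀ v ∈ V, (G x v).Nonempty)
    (hbdd : ∀ x ∈ X, ∀ v : Fin (k + 1) → W, (∀ i, v i ∈ V) →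
      BddAbove ((fun y => lam G B k y (Fin.tail v)) '' G x (v 0)))
    (hk : ConcaveOn ℝ (X ×ˢ univ.pi fun _ : Fin k => V) (fun p => lam G B k p.1 p.2)) :
    ConcaveOn ℝ (X ×ˢ univ.pi fun _ : Fin (k + 1) => V) (fun p => lam G B (k + 1) p.1 p.2) := by
  have hP : Convex ℝ (X ×ˢ univ.pi fun _ : Fin (k + 1) => V) :=
    hX.prod (convex_pi fun _ _ => hV)
  refine ConcaveOn.sSup_image (Γ := fun p => G p.1 (p.2 0))
    (g := fun q => lam G B k q.2 (Fin.tail q.1.2)) hP ⟨?_, ?_⟩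
    (fun p hp => hne _ hp.1 _ (hp.2 0 (mem_univ 0)))
    (fun p hp => hbdd _ hp.1 _ fun i => hp.2 i (mem_univ i))
  · intro q hq r hr a b ha hb hab
    exact ⟨hP hq.1 hr.1 ha hb hab,
      (hgraph (x := ((q.1.1, q.1.2 0), q.2)) (y := ((r.1.1, r.1.2 0), r.2))
        ⟨hq.1.1, hq.1.2 0 (mem_univ 0), hq.2⟩ ⟨hr.1.1, hr.1.2 0 (mem_univ 0), hr.2⟩
        ha hb hab).2.2⟩
  · intro q hq r hr a b ha hb hab
    exact hk.2 (x := (q.2, Fin.tail q.1.2)) (y := (r.2, Fin.tail r.1.2))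
      ⟨hmap _ hq.1.1 _ (hq.1.2 0 (mem_univ 0)) hq.2, fun i _ => hq.1.2 i.succ (mem_univ _)⟩
      ⟨hmap _ hr.1.1 _ (hr.1.2 0 (mem_univ 0)) hr.2, fun i _ => hr.1.2 i.succ (mem_univ _)⟩
      ha hb hab

end lam

theorem stmt8_general {n m : ℕ} (X : Set (Fin n → ℝ)) (V : Set (Fin m → ℝ))
    (G : (Fin n → ℝ) → (Fin m → ℝ) → Set (Fin n → ℝ))
    (hG : Standing X V G)
    (hXconv : Convex ℝ X) (hVconv : Convex ℝ V)
    (hgraph : Convex ℝ {p : ((Fin n → ℝ) × (Fin m → ℝ)) × (Fin n → ℝ) |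
      p.1.1 ∈ X ∧ p.1.2 ∈ V ∧ p.2 ∈ G p.1.1 p.1.2})
    (hmap : ∀ x ∈ X, ∀ v ∈ V, G x v ⊆ X)
    (B : (Fin n → ℝ) → ℝ)
    (hBconc : ConcaveOn ℝ X B) (hBusc : UpperSemicontinuousOn B X) :
    ∀ k : ℕ, ConcaveOn ℝ (X ×ˢ (Set.univ.pi fun _ : Fin k => V))
      (fun p : (Fin n → ℝ) × (Fin k → (Fin m → ℝ)) => lam G B k p.1 p.2) := by
  have hcomp : ∀ v ∈ V, ∀ K ⊆ X, IsCompact K → IsCompact (⋃ x ∈ K, G x v) :=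
    fun v hv K hKX hK => (hG.usc v hv).isCompact_biUnion
      (fun x hx => hG.closedVals x hx v hv) (hG.locBdd.slice hv) hK hKX
  intro k
  induction k with
  | zero => exact concaveOn_lam_zero hBconc
  | succ k ih =>
    refine ih.lam_succ hXconv hVconv hgraph hmap hG.nonemptyVals fun x hx v hv => ?_
    have hGx : IsCompact (G x (v 0)) := by
      simpa using hcomp _ (hv 0) {x} (Set.singleton_subset_iff.2 hx) isCompact_singleton
    exact bddAbove_lam_image hcomp hG.nonemptyVals hmap hBusc k (Fin.tail v)
      (hmap x hx _ (hv 0)) hGx fun i => hv i.succ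

/-- Under the standing assumptions, if in addition `G` has a convex graph, `𝒳` and `𝒱`
are convex, and `B : 𝒳 → [0,∞)` is concave and upper semicontinuous, then each
`λ_k^B` is jointly concave in `(x, v₀,…,v_{k−1}) ∈ 𝒳 × 𝒱^k`. -/
theorem stmt8 {n m : ℕ} (X : Set (Fin n → ℝ)) (V : Set (Fin m → ℝ))
    (G : (Fin n → ℝ) → (Fin m → ℝ) → Set (Fin n → ℝ))
    (hG : Standing X V G)
    (hXconv : Convex ℝ X) (hVconv : Convex ℝ V)
    (hgraph : Convex ℝ {p : ((Fin n → ℝ) × (Fin m → ℝ)) × (Fin n → ℝ) |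
      p.1.1 ∈ X ∧ p.1.2 ∈ V ∧ p.2 ∈ G p.1.1 p.1.2})
    (hmap : ∀ x ∈ X, ∀ v ∈ V, G x v ⊆ X)
    (B : (Fin n → ℝ) → ℝ) (hBnn : ∀ x ∈ X, 0 ≤ B x)
    (hBconc : ConcaveOn ℝ X B) (hBusc : UpperSemicontinuousOn B X) :
    ∀ k : ℕ, ConcaveOn ℝ (X ×ˢ (Set.univ.pi fun _ : Fin k => V))
      (fun p : (Fin n → ℝ) × (Fin k → (Fin m → ℝ)) => lam G B k p.1 p.2) :=
  stmt8_general X V G hG hXconv hVconv hgraph hmap B hBconc hBusc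
end

section
/- Under the standing assumptions on G, with G a convex set-valued map, 𝒳 and 𝒱 convex, let B : 𝒳 → [0, ∞) be a concave upper semicontinuous function, and suppose μ has a finite mean v̄ = E[v] ∈ 𝒱 and the function v ↦ sup_{x⁺ ∈ G(x, v)} B(x⁺) is μ-integrable for each x. If for each x ∈ 𝒳 \ X_u one has sup_{x⁺ ∈ G(x, v̄)} B(x⁺) ≤ B(x), then for each x ∈ 𝒳 \ X_u the supermartingale inequality E[ sup_{x⁺ ∈ G(x, v)} B(x⁺) ] ≤ B(x) holds, i.e. ∫ sup_{x⁺ ∈ G(x, v)} B(x⁺) dμ(v) ≤ B(x). -/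
/-!
Fix `x ∈ 𝒳 \ X_u`. Since the graph of `G` is convex and `B` is concave, the marginal
`φ v = sup_{x⁺ ∈ G(x,v)} B(x⁺)` is concave on `𝒱`; it is finite because `G(x,v)` is compact and
`B` is upper semicontinuous. Jensen's inequality then gives `E[φ v] ≤ φ v̄ ≤ B x`.

As `φ` has no regularity and `𝒱` need be neither closed nor measurable, Jensen's inequality is
read off the hypograph of `φ` from the fact that, in finite dimension, the barycenter of a
probability measure carried (in outer measure) by a convex set lies in that set. That is proved
by induction on dimension: a barycenter outside the set lies in its closure, so some hyperplane
through it supports the set without containing it; this hyperplane must carry all the mass.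
-/

open MeasureTheory Set Pointwise

theorem subset_vectorSpan_of_zero_mem_affineSpan {k E : Type*} [Ring k] [AddCommGroup E]
    [Module k E] {s : Set E} (h0 : (0 : E) ∈ affineSpan k s) : s ⊆ vectorSpan k s :=
  fun c hc => by
    simpa [direction_affineSpan] using
      (AffineSubspace.vsub_right_mem_direction_iff_mem h0 c).2 (subset_affineSpan k s hc)

theorem Convex.exists_forall_nonpos_exists_ne_zero {E : Type*} [NormedAddCommGroup E]
    [NormedSpace ℝ E] [FiniteDimensional ℝ E] {C : Set E} (hC : Convex ℝ C)
    (h0 : (0 : E) ∈ closure C) (h0C : (0 : E) ∉ C) :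
    ∃ l : StrongDual ℝ E, (∀ c ∈ C, l c ≤ 0) ∧ ∃ c ∈ C, l c ≠ 0 := by
  obtain ⟨c₀, hc₀⟩ : C.Nonempty := closure_nonempty_iff.1 ⟨0, h0⟩
  have hCW : C ⊆ vectorSpan ℝ C := subset_vectorSpan_of_zero_mem_affineSpan <|
    (AffineSubspace.closed_of_finiteDimensional _).closure_subset_iff.2 (subset_affineSpan ℝ C) h0
  obtain ⟨Wc, hWc⟩ := (vectorSpan ℝ C).exists_isCompl
  -- thickening `C` by a complement of its span gives a convex body still avoiding `0`
  set D := C + (Wc : Set E)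
  have hCD : C ⊆ D := fun c hc => ⟨c, hc, 0, Wc.zero_mem, add_zero c⟩
  have hD : Convex ℝ D := hC.add Wc.convex
  have h0D : (0 : E) ∉ D := by
    intro h
    obtain ⟨c, hc, w, hw, hcw⟩ := Set.mem_add.1 h
    have hw' : w ∈ vectorSpan ℝ C := by
      rw [← neg_eq_of_add_eq_zero_right hcw]; exact neg_mem (hCW hc)
    rw [Submodule.disjoint_def.1 hWc.disjoint w hw' hw, add_zero] at hcw
    exact h0C (hcw ▸ hc)
  have hDint : (interior D).Nonempty := by
    rw [hD.interior_nonempty_iff_affineSpan_eq_top,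
      AffineSubspace.affineSpan_eq_top_iff_vectorSpan_eq_top_of_nonempty ℝ E E ⟨c₀, hCD hc₀⟩,
      eq_top_iff, ← hWc.sup_eq_top]
    refine sup_le (vectorSpan_mono ℝ hCD) fun w hw => ?_
    simpa using vsub_mem_vectorSpan ℝ (Set.add_mem_add hc₀ hw : c₀ + w ∈ D) (hCD hc₀)
  obtain ⟨l, hl⟩ := geometric_hahn_banach_open_point hD.interior isOpen_interior
    (fun h => h0D (interior_subset h))
  simp only [map_zero] at hl
  have hlD : ∀ d ∈ D, l d ≤ 0 := by
    intro d hd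
    have : closure (interior D) ⊆ {x | l x ≤ 0} :=
      closure_minimal (fun a ha => (hl a ha).le) (isClosed_le l.continuous continuous_const)
    exact this ((hD.closure_interior_eq_closure_of_nonempty_interior hDint).symm ▸
      subset_closure hd)
  have hlWc : ∀ w ∈ Wc, l w = 0 := by
    intro w hw
    by_contra hlw
    have := hlD (c₀ + ((1 - l c₀) / l w) • w) ⟨c₀, hc₀, _, Wc.smul_mem _ hw, rfl⟩
    rw [map_add, map_smul, smul_eq_mul, div_mul_cancel₀ _ hlw] at this
    linarith
  obtain ⟨a, ha⟩ := hDint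
  obtain ⟨c, hc, w, hw, rfl⟩ := Set.mem_add.1 (interior_subset ha)
  refine ⟨l, fun c hc => hlD c (hCD hc), c, hc, fun hlc => ?_⟩
  have := hl _ ha
  rw [map_add, hlc, hlWc w hw, add_zero] at this
  exact this.false

theorem ae_mem_of_measure_eq_one {α : Type*} [MeasurableSpace α] {μ : Measure α}
    [IsProbabilityMeasure μ] {S T : Set α} (hS : μ S = 1) (hST : S ⊆ T)
    (hT : MeasurableSet T) : ∀ᵐ x ∂μ, x ∈ T :=
  (prob_compl_eq_zero_iff hT).2 (le_antisymm prob_le_one (hS ▸ measure_mono hST))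

section Barycenter

variable {E : Type*} [NormedAddCommGroup E] [NormedSpace ℝ E] [FiniteDimensional ℝ E]
  [MeasurableSpace E] [BorelSpace E] {μ : Measure E} [IsProbabilityMeasure μ]

theorem Convex.integral_id_mem {S : Set E} (hS : Convex ℝ S) (hμS : μ S = 1)
    (hμ : Integrable (fun x => x) μ) : ∫ x, x ∂μ ∈ S := by
  set b := ∫ x, x ∂μ
  suffices ∀ k, ∀ S : Set E, Convex ℝ S → μ S = 1 →
      Module.finrank ℝ (Submodule.span ℝ ((· - b) '' S)) = k → b ∈ S from
    this _ S hS hμS rfl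
  intro k
  induction k using Nat.strong_induction_on with
  | _ k ih =>
  intro S hS hμS hk
  by_contra hbS
  have hb : b ∈ closure S := hS.closure.integral_mem isClosed_closure
    (ae_mem_of_measure_eq_one hμS subset_closure isClosed_closure.measurableSet) hμ
  have hC : Convex ℝ ((· - b) '' S) := by
    simpa only [neg_add_eq_sub] using hS.translate (-b)
  obtain ⟨l, hlS, _, ⟨v₀, hv₀, rfl⟩, hlv₀⟩ := hC.exists_forall_nonpos_exists_ne_zero
    (by simpa using map_mem_closure (continuous_sub_right b) hb (mapsTo_image _ S))
    fun ⟨v, hv, hvb⟩ => hbS (sub_eq_zero.1 hvb ▸ hv)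
  simp only [map_sub, sub_nonpos, forall_mem_image] at hlS
  have hlb : ∀ᵐ v ∂μ, l v = l b := by
    have hle : ∀ᵐ v ∂μ, l v ≤ l b := ae_mem_of_measure_eq_one hμS hlS
      (measurableSet_le l.continuous.measurable measurable_const)
    refine (integral_eq_iff_of_ae_le (l.integrable_comp hμ) (integrable_const _) hle).1 ?_
    rw [l.integral_comp_comm hμ, integral_const, probReal_univ, one_smul]
  set S' := S ∩ {v | l v = l b}
  have hrank : Module.finrank ℝ (Submodule.span ℝ ((· - b) '' S')) < k := by
    set W := Submodule.span ℝ ((· - b) '' S)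
    have hle : Submodule.span ℝ ((· - b) '' S') ≤ W ⊓ LinearMap.ker (l : E →ₗ[ℝ] ℝ) := by
      refine Submodule.span_le.2 ?_
      rintro _ ⟨v, hv, rfl⟩
      exact ⟨Submodule.subset_span ⟨v, hv.1, rfl⟩, by simpa [sub_eq_zero] using hv.2⟩
    have hlt : W ⊓ LinearMap.ker (l : E →ₗ[ℝ] ℝ) < W :=
      inf_lt_left.2 fun h => hlv₀ (h (Submodule.subset_span ⟨v₀, hv₀, rfl⟩))
    exact hk ▸ (Submodule.finrank_mono hle).trans_lt
      (Submodule.finrank_lt_finrank_of_lt hlt)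
  exact hbS (ih _ hrank S' (hS.inter (convex_hyperplane l.isLinear _))
    ((measure_inter_conull hlb).trans hμS) rfl).1

theorem ConcaveOn.integral_le_map_integral_id {V : Set E} {f : E → ℝ}
    (hf : ConcaveOn ℝ V f) (hμV : μ V = 1) (hfμ : Integrable f μ) (hμ : Integrable (fun x => x) μ) :
    ∫ v, f v ∂μ ≤ f (∫ v, v ∂μ) := by
  set T : E → E × ℝ := fun v => (v, f v)
  have hT : AEMeasurable T μ := aemeasurable_id.prodMk hfμ.aemeasurable
  have := Measure.isProbabilityMeasure_map hT
  have hhypo : μ.map T {p | p.1 ∈ V ∧ p.2 ≤ f p.1} = 1 := by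
    refine le_antisymm prob_le_one ?_
    calc 1 = μ V := hμV.symm
      _ ≤ μ (T ⁻¹' {p | p.1 ∈ V ∧ p.2 ≤ f p.1}) := measure_mono fun v hv => ⟨hv, le_rfl⟩
      _ ≤ _ := Measure.le_map_apply hT _
  have hmem := hf.convex_hypograph.integral_id_mem hhypo
    ((integrable_map_measure aestronglyMeasurable_id hT).2 (hμ.prodMk hfμ))
  rw [integral_map hT (f := fun p => p) aestronglyMeasurable_id, integral_pair hμ hfμ]
    at hmem
  exact hmem.2

end Barycenter

theorem ConcaveOn.sSup_image_of_convex_graph {E F : Type*} [AddCommGroup E] [Module ℝ E]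
    [AddCommGroup F] [Module ℝ F] {Y : Set F} {B : F → ℝ} (hB : ConcaveOn ℝ Y B)
    {V : Set E} {Φ : E → Set F} (hV : Convex ℝ V)
    (hΦ : Convex ℝ {p : E × F | p.1 ∈ V ∧ p.2 ∈ Φ p.1}) (hΦY : ∀ v ∈ V, Φ v ⊆ Y)
    (hne : ∀ v ∈ V, (Φ v).Nonempty) (hbdd : ∀ v ∈ V, BddAbove (B '' Φ v)) :
    ConcaveOn ℝ V fun v => sSup (B '' Φ v) := by
  refine ⟨hV, fun v₁ hv₁ v₂ hv₂ a b ha hb hab => ?_⟩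
  have hne' : ∀ v ∈ V, (B '' Φ v).Nonempty := fun v hv => (hne v hv).image B
  simp only [smul_eq_mul]
  rw [← smul_eq_mul, ← smul_eq_mul, ← Real.sSup_smul_of_nonneg ha,
    ← Real.sSup_smul_of_nonneg hb, ← csSup_add (hne' v₁ hv₁).smul_set
      ((hbdd v₁ hv₁).smul_of_nonneg ha) (hne' v₂ hv₂).smul_set
      ((hbdd v₂ hv₂).smul_of_nonneg hb)]
  refine csSup_le (((hne' v₁ hv₁).smul_set).add (hne' v₂ hv₂).smul_set) ?_
  rintro _ ⟨_, ⟨_, ⟨y₁, hy₁, rfl⟩, rfl⟩, _, ⟨_, ⟨y₂, hy₂, rfl⟩, rfl⟩, rfl⟩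
  have hy : a • y₁ + b • y₂ ∈ Φ (a • v₁ + b • v₂) :=
    (hΦ (x := (v₁, y₁)) (y := (v₂, y₂)) ⟨hv₁, hy₁⟩ ⟨hv₂, hy₂⟩ ha hb hab).2
  exact (hB.2 (hΦY v₁ hv₁ hy₁) (hΦY v₂ hv₂ hy₂) ha hb hab).trans <|
    le_csSup (hbdd _ (hV hv₁ hv₂ ha hb hab)) ⟨_, hy, rfl⟩

theorem Standing.isCompact {n m : ℕ} {X : Set (Fin n → ℝ)} {V : Set (Fin m → ℝ)}
    {G : (Fin n → ℝ) → (Fin m → ℝ) → Set (Fin n → ℝ)} (hG : Standing X V G) {x : Fin n → ℝ}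
    (hx : x ∈ X) {v : Fin m → ℝ} (hv : v ∈ V) : IsCompact (G x v) := by
  obtain ⟨U, hU, β, -, hβ⟩ := hG.locBdd (x, v) ⟨hx, hv⟩
  exact Metric.isCompact_of_isClosed_isBounded (hG.closedVals x hx v hv)
    (isBounded_iff_forall_norm_le.2 ⟨β, hβ (x, v) ⟨mem_of_mem_nhds hU, hx, hv⟩⟩)

theorem stmt10_general {n m : ℕ} (X : Set (Fin n → ℝ)) (V : Set (Fin m → ℝ))
    (G : (Fin n → ℝ) → (Fin m → ℝ) → Set (Fin n → ℝ))
    (hG : Standing X V G)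
    (hVconv : Convex ℝ V)
    (hgraph : Convex ℝ {p : ((Fin n → ℝ) × (Fin m → ℝ)) × (Fin n → ℝ) |
      p.1.1 ∈ X ∧ p.1.2 ∈ V ∧ p.2 ∈ G p.1.1 p.1.2})
    (hmap : ∀ x ∈ X, ∀ v ∈ V, G x v ⊆ X)
    (Xu : Set (Fin n → ℝ))
    (B : (Fin n → ℝ) → ℝ)
    (hBconc : ConcaveOn ℝ X B) (hBusc : UpperSemicontinuousOn B X)
    (μ : Measure (Fin m → ℝ)) [IsProbabilityMeasure μ] (hμV : μ V = 1)
    (vbar : Fin m → ℝ)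
    (hIntId : Integrable (fun v : Fin m → ℝ => v) μ)
    (hmean : ∫ v, v ∂μ = vbar)
    (hIntSup : ∀ x ∈ X, Integrable (fun v => sSup (B '' G x v)) μ)
    (hsup : ∀ x ∈ X \ Xu, sSup (B '' G x vbar) ≤ B x) :
    ∀ x ∈ X \ Xu, ∫ v, sSup (B '' G x v) ∂μ ≤ B x := by
  intro x hx
  have hsection : Convex ℝ {p : (Fin m → ℝ) × (Fin n → ℝ) | p.1 ∈ V ∧ p.2 ∈ G x p.1} :=
    fun p hp q hq a b ha hb hab => by
      simpa [Convex.combo_self hab x] using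
        (hgraph (x := ((x, p.1), p.2)) (y := ((x, q.1), q.2)) ⟨hx.1, hp⟩ ⟨hx.1, hq⟩
          ha hb hab).2
  have hconc : ConcaveOn ℝ V fun v => sSup (B '' G x v) :=
    hBconc.sSup_image_of_convex_graph hVconv hsection (hmap x hx.1)
      (fun v hv => hG.nonemptyVals x hx.1 v hv) fun v hv =>
        (hBusc.mono (hmap x hx.1 v hv)).bddAbove_of_isCompact (hG.isCompact hx.1 hv)
  calc ∫ v, sSup (B '' G x v) ∂μ ≤ sSup (B '' G x (∫ v, v ∂μ)) :=
        hconc.integral_le_map_integral_id hμV (hIntSup x hx.1) hIntId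
    _ ≤ B x := hmean ▸ hsup x hx

/-- Under the standing assumptions with `G` a convex set-valued map, `𝒳, 𝒱` convex and
`B` concave and upper semicontinuous: if `μ` has mean `v̄ ∈ 𝒱`, the marginal function
is integrable, and `sup_{x⁺ ∈ G(x,v̄)} B(x⁺) ≤ B(x)` for every `x ∈ 𝒳 \ X_u`, then the
supermartingale inequality `E[sup_{x⁺ ∈ G(x,v)} B(x⁺)] ≤ B(x)` holds on `𝒳 \ X_u`. -/
theorem stmt10 {n m : ℕ} (X : Set (Fin n → ℝ)) (V : Set (Fin m → ℝ))
    (G : (Fin n → ℝ) → (Fin m → ℝ) → Set (Fin n → ℝ))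
    (hG : Standing X V G)
    (hXconv : Convex ℝ X) (hVconv : Convex ℝ V)
    (hgraph : Convex ℝ {p : ((Fin n → ℝ) × (Fin m → ℝ)) × (Fin n → ℝ) |
      p.1.1 ∈ X ∧ p.1.2 ∈ V ∧ p.2 ∈ G p.1.1 p.1.2})
    (hmap : ∀ x ∈ X, ∀ v ∈ V, G x v ⊆ X)
    (Xu : Set (Fin n → ℝ)) (hXu : Xu ⊆ X)
    (B : (Fin n → ℝ) → ℝ) (hBnn : ∀ x ∈ X, 0 ≤ B x)
    (hBconc : ConcaveOn ℝ X B) (hBusc : UpperSemicontinuousOn B X)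
    (μ : Measure (Fin m → ℝ)) [IsProbabilityMeasure μ] (hμV : μ V = 1)
    (vbar : Fin m → ℝ) (hvbarV : vbar ∈ V)
    (hIntId : Integrable (fun v : Fin m → ℝ => v) μ)
    (hmean : ∫ v, v ∂μ = vbar)
    (hIntSup : ∀ x ∈ X, Integrable (fun v => sSup (B '' G x v)) μ)
    (hsup : ∀ x ∈ X \ Xu, sSup (B '' G x vbar) ≤ B x) :
    ∀ x ∈ X \ Xu, ∫ v, sSup (B '' G x v) ∂μ ≤ B x :=
  stmt10_general X V G hG hVconv hgraph hmap Xu B hBconc hBusc μ hμV vbar hIntId hmean hIntSup hsup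
end

section
/- Under the standing assumptions on G, with G a convex set-valued map, 𝒳 and 𝒱 convex, let B : 𝒳 → [0, ∞) be a concave upper semicontinuous function, suppose μ has finite mean v̄ = E[v] ∈ 𝒱, all the functions λ_k^B are μ^{⊗k}-integrable, and for all x ∈ 𝒳 one has sup_{x⁺ ∈ G(x, v̄)} B(x⁺) ≤ B(x). Then for every 0 ≤ j ≤ k, every x ∈ 𝒳, and every fixed w_0, …, w_{j−1} ∈ 𝒱, the conditional-expectation inequality ∫ λ_k^B(x, w_0, …, w_{j−1}, u_j, …, u_{k−1}) dμ^{⊗(k−j)}(u_j, …, u_{k−1}) ≤ λ_j^B(x, w_0, …, w_{j−1}) holds; equivalently, the sequence Z_k = λ_k^B(x, v_0, …, v_{k−1}) is a supermartingale with respect to the filtration generated by the i.i.d. inputs v_0, v_1, …. -/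
open MeasureTheory Set Pointwise

/-!
For fixed past inputs `w`, the map `v ↦ λ_{j+1}^B(x, w, v)` is concave on `𝒱`, because a supremum
of a jointly concave function over the convex graph of `G` is again jointly concave. Jensen's
inequality gives `∫ λ_{j+1}^B(x, w, v) dμ(v) ≤ λ_{j+1}^B(x, w, v̄)`, and the hypothesis on `v̄`,
propagated through the recursion, gives `λ_{j+1}^B(x, w, v̄) ≤ λ_j^B(x, w)`. Integrating out the
later inputs first (induction on `k - j`) yields the claim. Upper semicontinuity and local
boundedness of `G` keep every `λ_k^B` locally bounded above on `𝒳`, so the suprema are genuine.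

Neither `λ_k^B` nor `𝒱` need be measurable, so `∫⁻` acts as a lower integral, `μ 𝒱 = 1` is an
outer-measure statement, and Jensen's inequality is proved for concave functions without any
regularity: either `f` has an affine majorant exact at the mean up to `ε` (separate
`(v̄, f v̄ + ε)` from the hypograph), or `v̄` lies on a proper face of `𝒱` carrying all the mass of
`μ`, and one inducts on the dimension of `𝒱`.
-/

open Topology

open scoped ENNReal

section Hypograph

variable {E : Type*} [NormedAddCommGroup E] [NormedSpace ℝ E]

-- Thickening the hypograph along a complement `W` of the direction of `V` gives it interior
-- points, so that Hahn–Banach yields a nonzero supporting functional.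
def hypographAlong (V : Set E) (W : Submodule ℝ E) (f : E → ℝ) : Set (E × ℝ) :=
  {p | ∃ v ∈ V, p.1 - v ∈ W ∧ p.2 ≤ f v}

variable {V : Set E} {W : Submodule ℝ E} {f : E → ℝ}

theorem vectorSpan_le_ker_of_forall_eq {a : E →L[ℝ] ℝ} {c : ℝ} (h : ∀ v ∈ V, a v = c) :
    vectorSpan ℝ V ≤ LinearMap.ker (a : E →ₗ[ℝ] ℝ) := by
  rw [vectorSpan_def, Submodule.span_le]
  rintro _ ⟨p, hp, q, hq, rfl⟩
  simp [h p hp, h q hq]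

theorem ConcaveOn.convex_hypographAlong (hf : ConcaveOn ℝ V f) :
    Convex ℝ (hypographAlong V W f) := by
  rintro p ⟨v₁, hv₁, hpW, hpf⟩ q ⟨v₂, hv₂, hqW, hqf⟩ a b ha hb hab
  refine ⟨a • v₁ + b • v₂, hf.1 hv₁ hv₂ ha hb hab, ?_, ?_⟩
  · have : a • (p.1 - v₁) + b • (q.1 - v₂) ∈ W := W.add_mem (W.smul_mem a hpW) (W.smul_mem b hqW)
    convert this using 1
    simp only [Prod.fst_add, Prod.smul_fst, smul_sub]
    abel
  · calc (a • p + b • q).2 = a * p.2 + b * q.2 := rfl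
      _ ≤ a * f v₁ + b * f v₂ := by gcongr
      _ ≤ f (a • v₁ + b • v₂) := hf.2 hv₁ hv₂ ha hb hab

theorem notMem_hypographAlong (hW : Disjoint (vectorSpan ℝ V) W) {v₀ : E} (hv₀ : v₀ ∈ V)
    {ε : ℝ} (hε : 0 < ε) : (v₀, f v₀ + ε) ∉ hypographAlong V W f := by
  rintro ⟨v, hv, hvW, hvf⟩
  have hv_eq : v₀ - v = 0 :=
    (Submodule.disjoint_def.1 hW) _ (vsub_mem_vectorSpan ℝ hv₀ hv) hvW
  rw [sub_eq_zero.1 hv_eq] at hvf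
  exact absurd hvf (by simpa using hε)

theorem nonempty_interior_hypographAlong [FiniteDimensional ℝ E] (hf : ConcaveOn ℝ V f)
    (hW : vectorSpan ℝ V ⊔ W = ⊤) {v₀ : E} (hv₀ : v₀ ∈ V) :
    (interior (hypographAlong V W f)).Nonempty := by
  set D := hypographAlong V W f
  have mem_D : ∀ v ∈ V, ∀ u ∈ W, ∀ t ≤ f v, (v + u, t) ∈ D := fun v hv u hu t ht =>
    ⟨v, hv, by simpa using hu, ht⟩
  have vertical : ((0 : E), (1 : ℝ)) ∈ vectorSpan ℝ D := by
    simpa using vsub_mem_vectorSpan ℝ (mem_D v₀ hv₀ 0 W.zero_mem _ le_rfl)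
      (mem_D v₀ hv₀ 0 W.zero_mem (f v₀ - 1) (by linarith))
  have along_W : ∀ u ∈ W, (u, (0 : ℝ)) ∈ vectorSpan ℝ D := fun u hu => by
    simpa using vsub_mem_vectorSpan ℝ (mem_D v₀ hv₀ u hu _ le_rfl)
      (mem_D v₀ hv₀ 0 W.zero_mem _ le_rfl)
  have along_V : vectorSpan ℝ V ≤ (vectorSpan ℝ D).comap (LinearMap.inl ℝ E ℝ) := by
    rw [vectorSpan_def, Submodule.span_le]
    rintro _ ⟨p, hp, q, hq, rfl⟩
    simpa using vsub_mem_vectorSpan ℝ (mem_D p hp 0 W.zero_mem (min (f p) (f q)) (min_le_left _ _))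
      (mem_D q hq 0 W.zero_mem (min (f p) (f q)) (min_le_right _ _))
  rw [hf.convex_hypographAlong.interior_nonempty_iff_affineSpan_eq_top,
    AffineSubspace.affineSpan_eq_top_iff_vectorSpan_eq_top_of_nonempty ℝ (E × ℝ) (E × ℝ)
      ⟨_, mem_D v₀ hv₀ 0 W.zero_mem _ le_rfl⟩, eq_top_iff]
  rintro ⟨e, t⟩ -
  obtain ⟨d, hd, u, hu, rfl⟩ := Submodule.mem_sup.1 (hW ▸ Submodule.mem_top : e ∈ _)
  have : ((d + u, t) : E × ℝ) = (d, 0) + (u, 0) + t • (0, 1) := by simp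
  rw [this]
  exact add_mem (add_mem (along_V hd) (along_W u hu)) (Submodule.smul_mem _ t vertical)

theorem ConcaveOn.exists_affine_majorant_or_exists_support [FiniteDimensional ℝ E]
    (hf : ConcaveOn ℝ V f) {v₀ : E} (hv₀ : v₀ ∈ V) {ε : ℝ} (hε : 0 < ε) :
    (∃ (c : ℝ) (l : E →L[ℝ] ℝ), (∀ v ∈ V, f v ≤ c + l v) ∧ c + l v₀ ≤ f v₀ + ε) ∨
      ∃ a : E →L[ℝ] ℝ, (∀ v ∈ V, a v ≤ a v₀) ∧ ∃ v ∈ V, a v < a v₀ := by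
  obtain ⟨W, hW⟩ := Submodule.exists_isCompl (vectorSpan ℝ V)
  obtain ⟨ψ, hψ0, hψ⟩ := geometric_hahn_banach_of_nonempty_interior_point
    hf.convex_hypographAlong
    (fun h => notMem_hypographAlong hW.disjoint hv₀ hε (interior_subset h))
    (nonempty_interior_hypographAlong hf hW.sup_eq_top hv₀)
  set a := ψ.comp (ContinuousLinearMap.inl ℝ E ℝ)
  set b := ψ (0, 1)
  have hψ_apply : ∀ v t, ψ (v, t) = a v + t * b := fun v t => by
    rw [show ((v, t) : E × ℝ) = (v, 0) + t • (0, 1) by simp, map_add, map_smul, smul_eq_mul]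
    rfl
  have hψ_le : ∀ v ∈ V, ∀ u ∈ W, ∀ t ≤ f v, a v + a u + t * b ≤ a v₀ + (f v₀ + ε) * b := by
    intro v hv u hu t ht
    have := hψ (v + u, t) ⟨v, hv, by simpa using hu, ht⟩
    rwa [hψ_apply, hψ_apply, map_add] at this
  have hψ_le₀ : ∀ v ∈ V, a v + f v * b ≤ a v₀ + (f v₀ + ε) * b := fun v hv => by
    simpa using hψ_le v hv 0 W.zero_mem _ le_rfl
  have hb : 0 ≤ b := by nlinarith [hψ_le₀ v₀ hv₀]
  have haW : ∀ u ∈ W, a u = 0 := by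
    intro u hu
    by_contra hau
    have := hψ_le v₀ hv₀ (((ε * b + 1) / a u) • u) (W.smul_mem _ hu) _ le_rfl
    rw [map_smul, smul_eq_mul, div_mul_cancel₀ _ hau] at this
    linarith
  -- A non-vertical supporting hyperplane (`b > 0`) is the graph of an affine majorant of `f`;
  -- a vertical one (`b = 0`) supports `V` at `v₀`.
  rcases hb.lt_or_eq with hb_pos | hb_zero
  · refine .inl ⟨a v₀ / b + f v₀ + ε, -b⁻¹ • a, fun v hv => ?_, ?_⟩
    · have := hψ_le₀ v hv
      refine le_of_mul_le_mul_right ?_ hb_pos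
      simp only [FunLike.coe_smul, Pi.smul_apply, smul_eq_mul]
      field_simp
      linarith
    · simp only [FunLike.coe_smul, Pi.smul_apply, smul_eq_mul]
      field_simp
      linarith
  · have ha_le : ∀ v ∈ V, a v ≤ a v₀ := fun v hv => by simpa [← hb_zero] using hψ_le₀ v hv
    refine .inr ⟨a, ha_le, ?_⟩
    by_contra! hconst
    have hker : vectorSpan ℝ V ⊔ W ≤ LinearMap.ker (a : E →ₗ[ℝ] ℝ) :=
      sup_le (vectorSpan_le_ker_of_forall_eq fun v hv => (ha_le v hv).antisymm (hconst v hv))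
        fun u hu => haW u hu
    have ha : ∀ e, a e = 0 := fun e => hker (hW.sup_eq_top ▸ Submodule.mem_top)
    exact hψ0 (ContinuousLinearMap.ext fun ⟨v, t⟩ => by simp [hψ_apply, ← hb_zero, ha])

theorem finrank_vectorSpan_inter_lt [FiniteDimensional ℝ E] {a : E →L[ℝ] ℝ} {v₀ v : E}
    (hv₀ : v₀ ∈ V) (hv : v ∈ V) (hne : a v ≠ a v₀) :
    Module.finrank ℝ (vectorSpan ℝ (V ∩ {v | a v = a v₀})) <
      Module.finrank ℝ (vectorSpan ℝ V) := by
  refine Submodule.finrank_lt_finrank_of_lt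
    (lt_of_le_of_ne (vectorSpan_mono ℝ inter_subset_left) fun heq => hne ?_)
  have := vectorSpan_le_ker_of_forall_eq (fun v (hv : v ∈ V ∩ _) => hv.2)
    (heq ▸ vsub_mem_vectorSpan ℝ hv hv₀)
  rwa [LinearMap.mem_ker, ContinuousLinearMap.coe_coe, vsub_eq_sub, map_sub, sub_eq_zero] at this

end Hypograph

section FullOuterMeasure

variable {α : Type*} [MeasurableSpace α] {μ : Measure α} [IsProbabilityMeasure μ] {V : Set α}

theorem ae_of_forall_mem_of_measure_eq_one (hV : μ V = 1) {p : α → Prop}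
    (hp : MeasurableSet {x | p x}) (h : ∀ x ∈ V, p x) : ∀ᵐ x ∂μ, p x :=
  (mem_ae_iff_prob_eq_one hp).2 (le_antisymm prob_le_one (hV ▸ measure_mono h))

theorem lintegral_mono_of_le_on_of_measure_eq_one (hV : μ V = 1) {h H : α → ℝ≥0∞}
    (hH : Measurable H) (hle : ∀ x ∈ V, h x ≤ H x) : ∫⁻ x, h x ∂μ ≤ ∫⁻ x, H x ∂μ := by
  rw [← iSup_lintegral_measurable_le_eq_lintegral h]
  refine iSup₂_le fun g hg => iSup_le fun hgh => lintegral_mono_ae ?_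
  exact ae_of_forall_mem_of_measure_eq_one hV (measurableSet_le hg hH)
    fun x hx => (hgh x).trans (hle x hx)

end FullOuterMeasure

section Jensen

variable {E : Type*} [NormedAddCommGroup E] [NormedSpace ℝ E] [MeasurableSpace E]
  {μ : Measure E} [IsProbabilityMeasure μ] {V : Set E}

theorem integral_const_add_apply [CompleteSpace E] (hid : Integrable id μ) (c : ℝ)
    (l : E →L[ℝ] ℝ) : ∫ v, (c + l v) ∂μ = c + l (∫ v, v ∂μ) := by
  have hl : Integrable (fun v => l v) μ := l.integrable_comp hid
  rw [integral_add (integrable_const c) hl, integral_const,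
    l.integral_comp_comm (φ := fun v => v) hid]
  simp

variable [BorelSpace E]

theorem lintegral_le_ofReal_of_le_affine [CompleteSpace E] (hV : μ V = 1)
    (hid : Integrable id μ) {h : E → ℝ≥0∞} {c : ℝ} {l : E →L[ℝ] ℝ}
    (hnn : ∀ v ∈ V, 0 ≤ c + l v) (hle : ∀ v ∈ V, h v ≤ ENNReal.ofReal (c + l v)) :
    ∫⁻ v, h v ∂μ ≤ ENNReal.ofReal (c + l (∫ v, v ∂μ)) := by
  have hmeas : Measurable fun v => c + l v := by fun_prop
  calc ∫⁻ v, h v ∂μ ≤ ∫⁻ v, ENNReal.ofReal (c + l v) ∂μ :=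
        lintegral_mono_of_le_on_of_measure_eq_one hV hmeas.ennreal_ofReal hle
    _ = ENNReal.ofReal (∫ v, (c + l v) ∂μ) :=
        (ofReal_integral_eq_lintegral_ofReal ((integrable_const c).add (l.integrable_comp hid))
          (ae_of_forall_mem_of_measure_eq_one hV (measurableSet_le measurable_const hmeas)
            hnn)).symm
    _ = ENNReal.ofReal (c + l (∫ v, v ∂μ)) := by rw [integral_const_add_apply hid]

theorem measure_inter_eq_one_of_le_apply_integral [CompleteSpace E] (hV : μ V = 1)
    (hid : Integrable id μ) {a : E →L[ℝ] ℝ} (ha : ∀ v ∈ V, a v ≤ a (∫ v, v ∂μ)) :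
    μ (V ∩ {v | a v = a (∫ v, v ∂μ)}) = 1 := by
  set c := a (∫ v, v ∂μ)
  have hnn : 0 ≤ᵐ[μ] fun v => c + (-a) v :=
    ae_of_forall_mem_of_measure_eq_one hV (measurableSet_le measurable_const (by fun_prop))
      fun v hv => by simpa using ha v hv
  have hzero : ∫ v, (c + (-a) v) ∂μ = 0 := by
    rw [integral_const_add_apply hid]
    simp [c]
  have hae := (integral_eq_zero_iff_of_nonneg_ae hnn
    ((integrable_const c).add ((-a).integrable_comp hid))).1 hzero
  rw [measure_congr (inter_ae_eq_left_of_ae_eq_univ (ae_eq_univ.2 ?_)), hV]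
  filter_upwards [hae] with v hv
  simp only [neg_apply, Pi.zero_apply] at hv
  exact (neg_add_eq_zero.1 (by linarith)).symm

theorem ConcaveOn.lintegral_le_ofReal_apply_integral [FiniteDimensional ℝ E] {f : E → ℝ}
    (hf : ConcaveOn ℝ V f) (hf0 : ∀ v ∈ V, 0 ≤ f v) (hV : μ V = 1) (hmean : ∫ v, v ∂μ ∈ V)
    (hid : Integrable id μ) {h : E → ℝ≥0∞} (hh : ∀ v ∈ V, h v ≤ ENNReal.ofReal (f v)) :
    ∫⁻ v, h v ∂μ ≤ ENNReal.ofReal (f (∫ v, v ∂μ)) := by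
  induction hN : Module.finrank ℝ (vectorSpan ℝ V) using Nat.strong_induction_on
    generalizing V with
  | _ N ih =>
  refine ENNReal.le_of_forall_pos_le_add fun ε hε _ => ?_
  rcases hf.exists_affine_majorant_or_exists_support hmean hε with
    ⟨c, l, hl, hlε⟩ | ⟨a, ha, v, hv, hlt⟩
  · calc ∫⁻ v, h v ∂μ ≤ ENNReal.ofReal (c + l (∫ v, v ∂μ)) :=
          lintegral_le_ofReal_of_le_affine hV hid (fun v hv => (hf0 v hv).trans (hl v hv))
            fun v hv => (hh v hv).trans (ENNReal.ofReal_le_ofReal (hl v hv))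
      _ ≤ ENNReal.ofReal (f (∫ v, v ∂μ) + ε) := ENNReal.ofReal_le_ofReal hlε
      _ ≤ ENNReal.ofReal (f (∫ v, v ∂μ)) + ε := by
          simpa using ENNReal.ofReal_add_le (p := f (∫ v, v ∂μ)) (q := ε)
  · have hface_convex : Convex ℝ (V ∩ {v | a v = a (∫ v, v ∂μ)}) :=
      hf.1.inter (convex_hyperplane a.toLinearMap.isLinear _)
    refine le_trans ?_ le_self_add
    exact ih _ (hN ▸ finrank_vectorSpan_inter_lt hmean hv hlt.ne)
      (hf.subset inter_subset_left hface_convex) (fun v hv => hf0 v hv.1)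
      (measure_inter_eq_one_of_le_apply_integral hV hid ha) ⟨hmean, rfl⟩
      (fun v hv => hh v hv.1) rfl

end Jensen

section Recursion

variable {α β : Type*} (G : α → β → Set α) (B : α → ℝ)

theorem lam_succ (k : ℕ) (x : α) (w : Fin (k + 1) → β) :
    lam G B (k + 1) x w = sSup ((fun y => lam G B k y (Fin.tail w)) '' G x (w 0)) := rfl

theorem lam_cons (k : ℕ) (x : α) (v : β) (w : Fin k → β) :
    lam G B (k + 1) x (Fin.cons v w) = sSup ((fun y => lam G B k y w) '' G x v) := rfl

theorem lam_nonneg (hB : ∀ y, 0 ≤ B y) (k : ℕ) (x : α) (w : Fin k → β) :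
    0 ≤ lam G B k x w := by
  induction k generalizing x with
  | zero => exact hB x
  | succ k ih => exact Real.sSup_nonneg (forall_mem_image.2 fun y _ => ih y _)

theorem lam_comp_cast {k k' : ℕ} (h : k = k') (x : α) (w : Fin k' → β) :
    lam G B k x (w ∘ Fin.cast h) = lam G B k' x w := by
  subst h
  rfl

end Recursion

theorem IsCompact.exists_isOpen_forall_le {α : Type*} [TopologicalSpace α] {K X : Set α}
    {f : α → ℝ} (hK : IsCompact K) (hf : ∀ x ∈ K, ∃ b, ∀ᶠ y in 𝓝[X] x, f y ≤ b) :
    ∃ O, IsOpen O ∧ K ⊆ O ∧ ∃ b, ∀ y ∈ O ∩ X, f y ≤ b := by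
  have hloc : ∀ x ∈ K, ∃ b, ∃ U, IsOpen U ∧ x ∈ U ∧ ∀ y ∈ U ∩ X, f y ≤ b := fun x hx => by
    obtain ⟨b, hb⟩ := hf x hx
    obtain ⟨U, hU, hxU, hUX⟩ := mem_nhdsWithin.1 hb
    exact ⟨b, U, hU, hxU, hUX⟩
  choose! b U hUo hxU hUb using hloc
  obtain ⟨t, htK, hKt⟩ := hK.elim_nhds_subcover U fun x hx => (hUo x hx).mem_nhds (hxU x hx)
  obtain ⟨c, hc⟩ := (t.image b).exists_le
  refine ⟨⋃ x ∈ t, U x, isOpen_biUnion fun x hx => hUo x (htK x hx), hKt, c, ?_⟩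
  rintro y ⟨hy, hyX⟩
  obtain ⟨x, hx, hyU⟩ := mem_iUnion₂.1 hy
  exact (hUb x (htK x hx) y ⟨hyU, hyX⟩).trans (hc _ (Finset.mem_image_of_mem b hx))

section UpperBounds

variable {E F : Type*} [NormedAddCommGroup E] [ProperSpace E] [TopologicalSpace F]
  {X : Set E} {V : Set F} {G : E → F → Set E} {B : E → ℝ}

theorem isCompact_of_locallyBoundedOn (hloc : LocallyBoundedOn (X ×ˢ V) fun p => G p.1 p.2)
    {x : E} {v : F} (hx : x ∈ X) (hv : v ∈ V) (hclosed : IsClosed (G x v)) :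
    IsCompact (G x v) := by
  obtain ⟨U, hU, β, -, hβ⟩ := hloc (x, v) ⟨hx, hv⟩
  exact Metric.isCompact_of_isClosed_isBounded hclosed
    (isBounded_iff_forall_norm_le.2 ⟨β, hβ (x, v) ⟨mem_of_mem_nhds hU, hx, hv⟩⟩)

theorem exists_eventually_lam_le (husc : ∀ v ∈ V, USCOn X fun x => G x v)
    (hloc : LocallyBoundedOn (X ×ˢ V) fun p => G p.1 p.2)
    (hclosed : ∀ x ∈ X, ∀ v ∈ V, IsClosed (G x v)) (hne : ∀ x ∈ X, ∀ v ∈ V, (G x v).Nonempty)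
    (hmap : ∀ x ∈ X, ∀ v ∈ V, G x v ⊆ X) (hB : UpperSemicontinuousOn B X) {k : ℕ}
    (w : Fin k → F) (hw : ∀ i, w i ∈ V) {x : E} (hx : x ∈ X) :
    ∃ b, ∀ᶠ y in 𝓝[X] x, lam G B k y w ≤ b := by
  induction k generalizing x with
  | zero => exact ⟨B x + 1, (hB x hx _ (lt_add_one _)).mono fun y hy => hy.le⟩
  | succ k ih =>
    have hK := isCompact_of_locallyBoundedOn hloc hx (hw 0) (hclosed x hx (w 0) (hw 0))
    obtain ⟨O, hO, hKO, b, hb⟩ := hK.exists_isOpen_forall_le fun z hz =>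
      ih (Fin.tail w) (fun i => hw i.succ) (hmap x hx (w 0) (hw 0) hz)
    obtain ⟨δ, hδ, hδO⟩ := hK.exists_thickening_subset_open hO hKO
    obtain ⟨U, hU, hUG⟩ := husc (w 0) (hw 0) x hx δ hδ
    refine ⟨b, ?_⟩
    filter_upwards [mem_nhdsWithin_of_mem_nhds hU, self_mem_nhdsWithin] with y hyU hyX
    refine csSup_le ((hne y hyX (w 0) (hw 0)).image _)
      (forall_mem_image.2 fun z hz => hb z ⟨?_, ?_⟩)
    · exact hδO (add_ball_zero δ (G x (w 0)) ▸ hUG y ⟨hyU, hyX⟩ hz)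
    · exact hmap y hyX (w 0) (hw 0) hz

theorem bddAbove_lam_image_s12 (husc : ∀ v ∈ V, USCOn X fun x => G x v)
    (hloc : LocallyBoundedOn (X ×ˢ V) fun p => G p.1 p.2)
    (hclosed : ∀ x ∈ X, ∀ v ∈ V, IsClosed (G x v)) (hne : ∀ x ∈ X, ∀ v ∈ V, (G x v).Nonempty)
    (hmap : ∀ x ∈ X, ∀ v ∈ V, G x v ⊆ X) (hB : UpperSemicontinuousOn B X) {k : ℕ}
    (w : Fin k → F) (hw : ∀ i, w i ∈ V) {x : E} (hx : x ∈ X) {v : F} (hv : v ∈ V) :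
    BddAbove ((fun y => lam G B k y w) '' G x v) := by
  obtain ⟨O, -, hKO, b, hb⟩ :=
    (isCompact_of_locallyBoundedOn hloc hx hv (hclosed x hx v hv)).exists_isOpen_forall_le
      fun z hz => exists_eventually_lam_le husc hloc hclosed hne hmap hB w hw (hmap x hx v hv hz)
  exact ⟨b, forall_mem_image.2 fun z hz => hb z ⟨hKO hz, hmap x hx v hv hz⟩⟩

end UpperBounds

theorem mul_sSup_add_mul_sSup_le {S T : Set ℝ} {a b M : ℝ} (hS : S.Nonempty) (hS' : BddAbove S)
    (hT : T.Nonempty) (hT' : BddAbove T) (ha : 0 ≤ a) (hb : 0 ≤ b)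
    (h : ∀ s ∈ S, ∀ t ∈ T, a * s + b * t ≤ M) : a * sSup S + b * sSup T ≤ M := by
  rw [← smul_eq_mul, ← smul_eq_mul, ← Real.sSup_smul_of_nonneg ha,
    ← Real.sSup_smul_of_nonneg hb, ← csSup_add (hS.smul_set) (hS'.smul_of_nonneg ha)
      (hT.smul_set) (hT'.smul_of_nonneg hb)]
  refine csSup_le (hS.smul_set.add hT.smul_set) ?_
  rintro _ ⟨_, ⟨s, hs, rfl⟩, _, ⟨t, ht, rfl⟩, rfl⟩
  exact h s hs t ht

theorem Fin.snoc_mem_of_forall_mem {β : Type*} {V : Set β} {k : ℕ} {w : Fin k → β}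
    (hw : ∀ i, w i ∈ V) {v : β} (hv : v ∈ V) (i : Fin (k + 1)) :
    (Fin.snoc w v : Fin (k + 1) → β) i ∈ V :=
  Fin.lastCases (by simpa using hv) (by simpa using hw) i

section SnocBound

variable {α β : Type*} {X : Set α} {V : Set β} {G : α → β → Set α} {B : α → ℝ}

theorem lam_snoc_le (hne : ∀ x ∈ X, ∀ v ∈ V, (G x v).Nonempty)
    (hmap : ∀ x ∈ X, ∀ v ∈ V, G x v ⊆ X)
    (hbdd : ∀ k (w : Fin k → β), (∀ i, w i ∈ V) → ∀ x ∈ X, ∀ v ∈ V,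
      BddAbove ((fun y => lam G B k y w) '' G x v))
    {v₀ : β} (hsup : ∀ x ∈ X, sSup (B '' G x v₀) ≤ B x) {j : ℕ} {x : α} (hx : x ∈ X)
    {w : Fin j → β} (hw : ∀ i, w i ∈ V) :
    lam G B (j + 1) x (Fin.snoc w v₀) ≤ lam G B j x w := by
  induction j generalizing x with
  | zero =>
    rw [Fin.snoc_zero]
    exact hsup x hx
  | succ j ih =>
    rw [← Fin.cons_self_tail w, ← Fin.cons_snoc_eq_snoc_cons, lam_cons, lam_cons]
    refine csSup_le ((hne x hx _ (hw 0)).image _) (forall_mem_image.2 fun y hy => ?_)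
    exact (ih (hmap x hx _ (hw 0) hy) fun i => hw i.succ).trans
      (le_csSup (hbdd j _ (fun i => hw i.succ) x hx _ (hw 0)) (mem_image_of_mem _ hy))

end SnocBound

section Concavity

variable {E F : Type*} [AddCommGroup E] [Module ℝ E] [AddCommGroup F] [Module ℝ F]
  {X : Set E} {V : Set F} {G : E → F → Set E} {B : E → ℝ}

theorem concaveOn_lam (hX : Convex ℝ X) (hV : Convex ℝ V)
    (hgraph : Convex ℝ {p : (E × F) × E | p.1.1 ∈ X ∧ p.1.2 ∈ V ∧ p.2 ∈ G p.1.1 p.1.2})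
    (hne : ∀ x ∈ X, ∀ v ∈ V, (G x v).Nonempty) (hmap : ∀ x ∈ X, ∀ v ∈ V, G x v ⊆ X)
    (hB : ConcaveOn ℝ X B)
    (hbdd : ∀ k (w : Fin k → F), (∀ i, w i ∈ V) → ∀ x ∈ X, ∀ v ∈ V,
      BddAbove ((fun y => lam G B k y w) '' G x v)) (k : ℕ) :
    ConcaveOn ℝ (X ×ˢ univ.pi fun _ : Fin k => V) fun p => lam G B k p.1 p.2 := by
  refine ⟨hX.prod (convex_pi fun _ _ => hV), ?_⟩
  induction k with
  | zero =>
    rintro ⟨x₁, w₁⟩ ⟨hx₁, -⟩ ⟨x₂, w₂⟩ ⟨hx₂, -⟩ a b ha hb hab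
    exact hB.2 hx₁ hx₂ ha hb hab
  | succ k ih =>
    rintro ⟨x₁, w₁⟩ ⟨hx₁, hw₁⟩ ⟨x₂, w₂⟩ ⟨hx₂, hw₂⟩ a b ha hb hab
    simp only [mem_univ_pi] at hw₁ hw₂
    have hx : a • x₁ + b • x₂ ∈ X := hX hx₁ hx₂ ha hb hab
    have hw : ∀ i, (a • w₁ + b • w₂) i ∈ V := fun i => hV (hw₁ i) (hw₂ i) ha hb hab
    simp only [Prod.smul_mk, Prod.mk_add_mk, smul_eq_mul, lam_succ]
    refine mul_sSup_add_mul_sSup_le ((hne x₁ hx₁ _ (hw₁ 0)).image _)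
      (hbdd k _ (fun i => hw₁ i.succ) x₁ hx₁ _ (hw₁ 0)) ((hne x₂ hx₂ _ (hw₂ 0)).image _)
      (hbdd k _ (fun i => hw₂ i.succ) x₂ hx₂ _ (hw₂ 0)) ha hb ?_
    rintro _ ⟨y₁, hy₁, rfl⟩ _ ⟨y₂, hy₂, rfl⟩
    have hy : a • y₁ + b • y₂ ∈ G (a • x₁ + b • x₂) ((a • w₁ + b • w₂) 0) :=
      (hgraph (x := ((x₁, w₁ 0), y₁)) (y := ((x₂, w₂ 0), y₂)) ⟨hx₁, hw₁ 0, hy₁⟩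
        ⟨hx₂, hw₂ 0, hy₂⟩ ha hb hab).2.2
    calc a * lam G B k y₁ (Fin.tail w₁) + b * lam G B k y₂ (Fin.tail w₂)
        ≤ lam G B k (a • y₁ + b • y₂) (Fin.tail (a • w₁ + b • w₂)) :=
          ih (x := (y₁, Fin.tail w₁)) (y := (y₂, Fin.tail w₂))
            ⟨hmap x₁ hx₁ _ (hw₁ 0) hy₁, fun i _ => hw₁ i.succ⟩
            ⟨hmap x₂ hx₂ _ (hw₂ 0) hy₂, fun i _ => hw₂ i.succ⟩ ha hb hab
      _ ≤ _ := le_csSup (hbdd k _ (fun i => hw i.succ) _ hx _ (hw 0)) ⟨_, hy, rfl⟩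

theorem concaveOn_lam_snoc (hX : Convex ℝ X) (hV : Convex ℝ V)
    (hgraph : Convex ℝ {p : (E × F) × E | p.1.1 ∈ X ∧ p.1.2 ∈ V ∧ p.2 ∈ G p.1.1 p.1.2})
    (hne : ∀ x ∈ X, ∀ v ∈ V, (G x v).Nonempty) (hmap : ∀ x ∈ X, ∀ v ∈ V, G x v ⊆ X)
    (hB : ConcaveOn ℝ X B)
    (hbdd : ∀ k (w : Fin k → F), (∀ i, w i ∈ V) → ∀ x ∈ X, ∀ v ∈ V,
      BddAbove ((fun y => lam G B k y w) '' G x v)) {k : ℕ} {x : E} (hx : x ∈ X)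
    {w : Fin k → F} (hw : ∀ i, w i ∈ V) :
    ConcaveOn ℝ V fun v => lam G B (k + 1) x (Fin.snoc w v) := by
  have hmem : ∀ v ∈ V, (x, (Fin.snoc w v : Fin (k + 1) → F)) ∈ X ×ˢ univ.pi fun _ => V :=
    fun v hv => ⟨hx, fun i _ => Fin.snoc_mem_of_forall_mem hw hv i⟩
  refine ⟨hV, fun v₁ hv₁ v₂ hv₂ a b ha hb hab => ?_⟩
  have hsnoc : a • (Fin.snoc w v₁ : Fin (k + 1) → F) + b • (Fin.snoc w v₂ : Fin (k + 1) → F) =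
      (Fin.snoc w (a • v₁ + b • v₂) : Fin (k + 1) → F) := by
    funext i
    refine Fin.lastCases ?_ (fun i => ?_) i <;> simp [← add_smul, hab]
  simpa [Convex.combo_self hab, hsnoc] using
    (concaveOn_lam hX hV hgraph hne hmap hB hbdd (k + 1)).2 (hmem v₁ hv₁) (hmem v₂ hv₂) ha hb hab

end Concavity

theorem lintegral_pi_fin_succ_le {α : Type*} [MeasurableSpace α] (μ : Measure α) [SigmaFinite μ]
    {r : ℕ} (F : (Fin (r + 1) → α) → ℝ≥0∞) :
    ∫⁻ u, F u ∂(Measure.pi fun _ => μ) ≤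
      ∫⁻ v, ∫⁻ u, F (Fin.cons v u) ∂(Measure.pi fun _ => μ) ∂μ := by
  let e := MeasurableEquiv.piFinSuccAbove (fun _ : Fin (r + 1) => α) 0
  rw [MeasurePreserving.lintegral_map_equiv F e.symm
    ((measurePreserving_piFinSuccAbove (fun _ => μ) 0).symm e)]
  refine (lintegral_prod_le _).trans_eq ?_
  simp only [e, MeasurableEquiv.piFinSuccAbove_symm_apply, Fin.insertNthEquiv_zero]
  rfl

theorem stmt12_general {n m : ℕ} (X : Set (Fin n → ℝ)) (V : Set (Fin m → ℝ))
    (G : (Fin n → ℝ) → (Fin m → ℝ) → Set (Fin n → ℝ))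
    (hG : Standing X V G)
    (hXconv : Convex ℝ X) (hVconv : Convex ℝ V)
    (hgraph : Convex ℝ {p : ((Fin n → ℝ) × (Fin m → ℝ)) × (Fin n → ℝ) |
      p.1.1 ∈ X ∧ p.1.2 ∈ V ∧ p.2 ∈ G p.1.1 p.1.2})
    (hmap : ∀ x ∈ X, ∀ v ∈ V, G x v ⊆ X)
    (μ : Measure (Fin m → ℝ)) [IsProbabilityMeasure μ] (hμV : μ V = 1)
    (B : (Fin n → ℝ) → ℝ) (hBnn : ∀ y, 0 ≤ B y)
    (hBconc : ConcaveOn ℝ X B) (hBusc : UpperSemicontinuousOn B X)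
    (vbar : Fin m → ℝ) (hvbarV : vbar ∈ V)
    (hIntId : Integrable (fun v : Fin m → ℝ => v) μ)
    (hmean : ∫ v, v ∂μ = vbar)
    (hsup : ∀ x ∈ X, sSup (B '' G x vbar) ≤ B x) :
    ∀ (j r : ℕ), ∀ x ∈ X, ∀ w : Fin j → (Fin m → ℝ), (∀ i, w i ∈ V) →
      ∫⁻ u : Fin r → (Fin m → ℝ),
          ENNReal.ofReal (lam G B (j + r) x (Fin.append w u))
          ∂(Measure.pi fun _ : Fin r => μ)
        ≤ ENNReal.ofReal (lam G B j x w) := by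
  obtain ⟨husc, hloc, hne, hclosed, -, -⟩ := hG
  have hbdd : ∀ k (w : Fin k → (Fin m → ℝ)), (∀ i, w i ∈ V) → ∀ x ∈ X, ∀ v ∈ V,
      BddAbove ((fun y => lam G B k y w) '' G x v) := fun _ w hw _ hx _ hv =>
    bddAbove_lam_image_s12 husc hloc hclosed hne hmap hBusc w hw hx hv
  intro j r
  induction r generalizing j with
  | zero =>
    intro x _ w _
    have hconst : ∀ u : Fin 0 → (Fin m → ℝ), lam G B j x (Fin.append w u) = lam G B j x w :=
      fun u => by
        rw [Subsingleton.elim u Fin.elim0, Fin.append_elim0]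
        exact lam_comp_cast G B (add_zero j) x w
    simp [hconst]
  | succ r ih =>
    intro x hx w hw
    calc _ ≤ ∫⁻ v, ∫⁻ u, ENNReal.ofReal (lam G B (j + (r + 1)) x (Fin.append w (Fin.cons v u)))
            ∂(Measure.pi fun _ => μ) ∂μ := lintegral_pi_fin_succ_le μ _
      _ ≤ ENNReal.ofReal (lam G B (j + 1) x (Fin.snoc w vbar)) := by
        rw [← hmean]
        refine (concaveOn_lam_snoc hXconv hVconv hgraph hne hmap hBconc hbdd hx hw
          ).lintegral_le_ofReal_apply_integral (fun v _ => lam_nonneg G B hBnn _ _ _) hμV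
          (hmean ▸ hvbarV) hIntId fun v hv => ?_
        simp_rw [Fin.append_right_cons, lam_comp_cast]
        exact ih (j + 1) x hx _ (Fin.snoc_mem_of_forall_mem hw hv)
      _ ≤ ENNReal.ofReal (lam G B j x w) :=
        ENNReal.ofReal_le_ofReal (lam_snoc_le hne hmap hbdd hsup hx hw)

/-- Under the standing assumptions with `G` a convex set-valued map, `𝒳, 𝒱` convex,
`B` concave and upper semicontinuous, `μ` of mean `v̄ ∈ 𝒱`, the `λ_k^B` integrable,
and the concave supermartingale condition `sup_{x⁺ ∈ G(x,v̄)} B(x⁺) ≤ B(x)` on `𝒳`: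
for all `0 ≤ j ≤ k` (written `k = j + r`), all `x ∈ 𝒳` and fixed `w₀,…,w_{j−1} ∈ 𝒱`,
`∫ λ_k^B(x, w₀,…,w_{j−1}, u_j,…,u_{k−1}) dμ^{⊗(k−j)} ≤ λ_j^B(x, w₀,…,w_{j−1})`;
i.e. `Z_k = λ_k^B(x, v₀,…,v_{k−1})` is a supermartingale. -/
theorem stmt12 {n m : ℕ} (X : Set (Fin n → ℝ)) (V : Set (Fin m → ℝ))
    (G : (Fin n → ℝ) → (Fin m → ℝ) → Set (Fin n → ℝ))
    (hG : Standing X V G)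
    (hXconv : Convex ℝ X) (hVconv : Convex ℝ V)
    (hgraph : Convex ℝ {p : ((Fin n → ℝ) × (Fin m → ℝ)) × (Fin n → ℝ) |
      p.1.1 ∈ X ∧ p.1.2 ∈ V ∧ p.2 ∈ G p.1.1 p.1.2})
    (hmap : ∀ x ∈ X, ∀ v ∈ V, G x v ⊆ X)
    (μ : Measure (Fin m → ℝ)) [IsProbabilityMeasure μ] (hμV : μ V = 1)
    (B : (Fin n → ℝ) → ℝ) (hBnn : ∀ y, 0 ≤ B y)
    (hBconc : ConcaveOn ℝ X B) (hBusc : UpperSemicontinuousOn B X)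
    (vbar : Fin m → ℝ) (hvbarV : vbar ∈ V)
    (hIntId : Integrable (fun v : Fin m → ℝ => v) μ)
    (hmean : ∫ v, v ∂μ = vbar)
    (hIntLam : ∀ (k : ℕ), ∀ x ∈ X,
      Integrable (fun v : Fin k → (Fin m → ℝ) => lam G B k x v)
        (Measure.pi fun _ : Fin k => μ))
    (hsup : ∀ x ∈ X, sSup (B '' G x vbar) ≤ B x) :
    ∀ (j r : ℕ), ∀ x ∈ X, ∀ w : Fin j → (Fin m → ℝ), (∀ i, w i ∈ V) →
      ∫⁻ u : Fin r → (Fin m → ℝ),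
          ENNReal.ofReal (lam G B (j + r) x (Fin.append w u))
          ∂(Measure.pi fun _ : Fin r => μ)
        ≤ ENNReal.ofReal (lam G B j x w) :=
  stmt12_general X V G hG hXconv hVconv hgraph hmap μ hμV B hBnn hBconc hBusc vbar hvbarV hIntId
    hmean hsup
end
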